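/- arXiv:1110.2977 — 3 statements merged into one kernel-verified Lean document; each statement's English description precedes it below -/
import Mathlib

section
/- Let f: G^{n+1} → A be a homogeneous group n-cocycle (df = 0, f equivariant). Define for p+q = n-1 the cochains ψ^{p,q}(x̄, ȳ) = (-1)^p f(x̄, ȳ) ∈ A^{p,q}(G,A) (identifying G^{p+1} × G^{q+1} ≅ G^{n+1}). Then d_v ψ^{p,q} = d_h ψ^{p-1,q+1} for 1 ≤ p ≤ n-1, and the total differential of Σ_{p+q=n-1} (-1)^p ψ^{p,q} in the total complex equals j_v^n(f) - j_h^n(f), where j_v^n(f)(x̄, y_0) = f(x̄) viewed in A^{n,0} and j_h^n(f)(x_0, ȳ) = f(ȳ) viewed in A^{0,n}. -/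
/-! On a concatenation `x̄ ++ ȳ`, the simplicial coboundary `δf` splits into the faces that
delete an entry of `x̄`, which make up `d_h ψ`, and those that delete an entry of `ȳ`, which
make up `d_v ψ` up to the sign `(-1)^p`. Hence `d_v ψ^{p+1,q} + d_h ψ^{p,q+1} = -ψ^{p+1,q+1}(δf)`;
at the two ends of the antidiagonal one block has length one, its single face is empty and the
corresponding sum collapses to the augmentation `j_v f` or `j_h f`. A cocycle has `δf = 0`. -/

/-- The horizontal differential of the double complex
`A^{p,q}(G,A) = Map(G^{p+1} × G^{q+1}, A)`. -/
def dH {G : Type*} {A : Type*} [AddCommGroup A] (p q : ℕ)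
    (f : (Fin (p + 1) → G) × (Fin (q + 1) → G) → A) :
    (Fin (p + 2) → G) × (Fin (q + 1) → G) → A :=
  fun xy => ∑ i : Fin (p + 2),
    ((-1 : ℤ) ^ (i : ℕ)) • f (fun j => xy.1 (i.succAbove j), xy.2)

/-- The vertical differential of the double complex, with the sign `(-1)^p`. -/
def dV {G : Type*} {A : Type*} [AddCommGroup A] (p q : ℕ)
    (f : (Fin (p + 1) → G) × (Fin (q + 1) → G) → A) :
    (Fin (p + 1) → G) × (Fin (q + 2) → G) → A :=
  fun xy => ((-1 : ℤ) ^ p) • ∑ i : Fin (q + 2),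
    ((-1 : ℤ) ^ (i : ℕ)) • f (xy.1, fun j => xy.2 (i.succAbove j))

/-- The simplicial differential of the standard cochain complex. -/
def stdDiff (G : Type*) (A : Type*) [AddCommGroup A] (n : ℕ)
    (f : (Fin (n + 1) → G) → A) : (Fin (n + 2) → G) → A :=
  fun g => ∑ i : Fin (n + 2), ((-1 : ℤ) ^ (i : ℕ)) • f (fun j => g (i.succAbove j))

/-- The action of `G` on cochains: `(g.f)(g₀,…,g_p) = g.(f(g⁻¹g₀,…,g⁻¹g_p))`. -/
def cochainAct {G : Type*} [Group G] {A : Type*} [AddCommGroup A] [DistribMulAction G A]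
    (p : ℕ) (g : G) (f : (Fin (p + 1) → G) → A) : (Fin (p + 1) → G) → A :=
  fun x => g • f (fun i => g⁻¹ * x i)

/-- The cochain `ψ^{p,q}(x̄,ȳ) = (-1)^p f(x̄,ȳ)` in `A^{p,q}(G,A)` obtained from
an `n`-cochain `f` via the identification `G^{p+1} × G^{q+1} ≅ G^{n+1}`
(for `p + q = n - 1`). -/
def psiPQ {G : Type*} {A : Type*} [AddCommGroup A] {n : ℕ}
    (f : (Fin (n + 1) → G) → A) (p q : ℕ) (hpq : p + 1 + (q + 1) = n + 1) :
    (Fin (p + 1) → G) × (Fin (q + 1) → G) → A :=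
  fun xy => ((-1 : ℤ) ^ p) • f (fun k => Fin.append xy.1 xy.2 (Fin.cast hpq.symm k))

/-- The vertical augmentation `j_v(f)(x̄, y₀) = f(x̄)` into bidegree `(n,0)`. -/
def jV {G : Type*} {A : Type*} {n : ℕ} (f : (Fin (n + 1) → G) → A) :
    (Fin (n + 1) → G) × (Fin 1 → G) → A := fun xy => f xy.1

/-- The horizontal augmentation `j_h(f)(x₀, ȳ) = f(ȳ)` into bidegree `(0,n)`. -/
def jH {G : Type*} {A : Type*} {n : ℕ} (f : (Fin (n + 1) → G) → A) :
    (Fin 1 → G) × (Fin (n + 1) → G) → A := fun xy => f xy.2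

namespace Fin

variable {α : Type*} {a b : ℕ}

theorem append_succAbove_castAdd {n : ℕ} (h : a + b = n) (x : Fin (a + 1) → α) (y : Fin b → α)
    (i : Fin (a + 1)) (k : Fin n) :
    append x y ((((castAdd b i).cast (by omega) : Fin (n + 1)).succAbove k).cast (by omega)) =
      append (fun j => x (i.succAbove j)) y (k.cast h.symm) := by
  obtain ⟨k, rfl⟩ := (finCongr h).surjective k
  refine Fin.addCases (fun l => ?_) (fun l => ?_) k
  · rw [finCongr_apply, cast_cast, cast_eq_self, append_left, ← append_left x y]
    congr 1; ext; grind [succAbove]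
  · rw [finCongr_apply, cast_cast, cast_eq_self, append_right, ← append_right x y]
    congr 1; ext; grind [succAbove]

theorem append_succAbove_natAdd {n : ℕ} (h : a + b = n) (x : Fin a → α) (y : Fin (b + 1) → α)
    (j : Fin (b + 1)) (k : Fin n) :
    append x y ((((natAdd a j).cast (by omega) : Fin (n + 1)).succAbove k).cast (by omega)) =
      append x (fun l => y (j.succAbove l)) (k.cast h.symm) := by
  obtain ⟨k, rfl⟩ := (finCongr h).surjective k
  refine Fin.addCases (fun l => ?_) (fun l => ?_) k
  · rw [finCongr_apply, cast_cast, cast_eq_self, append_left, ← append_left x y]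
    congr 1; ext; grind [succAbove]
  · rw [finCongr_apply, cast_cast, cast_eq_self, append_right, ← append_right x y]
    congr 1; ext; grind [succAbove]

end Fin

section

variable {G A : Type*} [AddCommGroup A]

theorem stdDiff_append {n a b : ℕ} (f : (Fin (n + 1) → G) → A) (h : a + 1 + (b + 1) = n + 2)
    (x : Fin (a + 1) → G) (y : Fin (b + 1) → G) :
    stdDiff G A n f (fun k => Fin.append x y (k.cast h.symm)) =
      ∑ i : Fin (a + 1), ((-1 : ℤ) ^ (i : ℕ)) •
          f (fun k => Fin.append (fun j => x (i.succAbove j)) y (k.cast (by omega))) +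
        ((-1 : ℤ) ^ (a + 1)) • ∑ j : Fin (b + 1), ((-1 : ℤ) ^ (j : ℕ)) •
          f (fun k => Fin.append x (fun l => y (j.succAbove l)) (k.cast (by omega))) := by
  obtain rfl : n = a + b := by omega
  rw [stdDiff, ← (finCongr h).sum_comp, Fin.sum_univ_add, Finset.smul_sum]
  congr 1 <;> refine Finset.sum_congr rfl fun i _ => ?_
  · simp only [finCongr_apply, Fin.val_cast, Fin.val_castAdd]
    congr 2
    ext k
    exact Fin.append_succAbove_castAdd (by omega) x y i k
  · simp only [finCongr_apply, Fin.val_cast, Fin.val_natAdd, smul_smul, ← pow_add]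
    congr 2
    ext k
    exact Fin.append_succAbove_natAdd (by omega) x y i k

theorem psiPQ_zero {n : ℕ} (p q : ℕ) (h : p + 1 + (q + 1) = n + 1) :
    psiPQ (0 : (Fin (n + 1) → G) → A) p q h = 0 := by
  funext xy
  simp [psiPQ]

theorem dV_psiPQ_add_dH_psiPQ {n p q : ℕ} (f : (Fin (n + 1) → G) → A)
    (h₁ : p + 1 + 1 + (q + 1) = n + 1) (h₂ : p + 1 + (q + 1 + 1) = n + 1) :
    dV (p + 1) q (psiPQ f (p + 1) q h₁) + dH p (q + 1) (psiPQ f p (q + 1) h₂) =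
      -psiPQ (stdDiff G A n f) (p + 1) (q + 1) (by omega) := by
  funext ⟨x, y⟩
  simp only [Pi.add_apply, Pi.neg_apply, dV, dH, psiPQ]
  rw [stdDiff_append f (by omega) x y]
  simp only [smul_add, Finset.smul_sum, smul_smul, neg_add, ← Finset.sum_neg_distrib, ← neg_smul]
  rw [add_comm]
  congr 1 <;> refine Finset.sum_congr rfl fun i _ => ?_ <;> congr 1 <;> ring

theorem dH_psiPQ_add_jV {m : ℕ} (f : (Fin (m + 2) → G) → A) (h : m + 1 + (0 + 1) = m + 2) :
    dH m 0 (psiPQ f m 0 h) + jV f = -psiPQ (stdDiff G A (m + 1) f) (m + 1) 0 (by omega) := by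
  funext ⟨x, y⟩
  have hx : (fun k => Fin.append x (fun l => y ((0 : Fin 1).succAbove l)) (k.cast (by omega))) =
      x := by
    simp [Fin.append_right_nil]
  simp only [Pi.add_apply, Pi.neg_apply, dH, jV, psiPQ]
  rw [stdDiff_append f (by omega) x y, Fin.sum_univ_one, Fin.val_zero, pow_zero, one_smul, hx]
  simp only [smul_add, Finset.smul_sum, smul_smul, neg_add, ← Finset.sum_neg_distrib, ← neg_smul]
  congr 1
  · exact Finset.sum_congr rfl fun i _ => by congr 1; ring
  · simp [pow_succ, ← mul_pow]

theorem dV_psiPQ_sub_jH {m : ℕ} (f : (Fin (m + 2) → G) → A) (h : 0 + 1 + (m + 1) = m + 2) :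
    dV 0 m (psiPQ f 0 m h) - jH f = -psiPQ (stdDiff G A (m + 1) f) 0 (m + 1) (by omega) := by
  funext ⟨x, y⟩
  have hy : (fun k => Fin.append (fun l => x ((0 : Fin 1).succAbove l)) y (k.cast (by omega))) =
      y := by
    simp [Fin.append_left_nil]
  simp only [Pi.sub_apply, Pi.neg_apply, dV, jH, psiPQ]
  rw [stdDiff_append f (by omega) x y, Fin.sum_univ_one, Fin.val_zero, pow_zero, one_smul, hy]
  simp only [one_smul, zero_add, pow_one, neg_one_smul, neg_add, neg_neg]
  abel

end

theorem psi_total_coboundary_general {G : Type*} {A : Type*} [AddCommGroup A]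
    (m : ℕ) (f : (Fin (m + 2) → G) → A)
    (hcoc : stdDiff G A (m + 1) f = 0) :
    (∀ (p q : ℕ) (h1 : p + 1 + 1 + (q + 1) = m + 2) (h2 : p + 1 + (q + 1 + 1) = m + 2),
      dV (p + 1) q (psiPQ f (p + 1) q h1) + dH p (q + 1) (psiPQ f p (q + 1) h2) = 0) ∧
    (∀ h1 : m + 1 + (0 + 1) = m + 2,
      dH m 0 (psiPQ f m 0 h1) + jV f = 0) ∧
    (∀ h2 : 0 + 1 + (m + 1) = m + 2,
      dV 0 m (psiPQ f 0 m h2) = jH f) := by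
  refine ⟨fun p q h1 h2 => ?_, fun h1 => ?_, fun h2 => ?_⟩
  · rw [dV_psiPQ_add_dH_psiPQ, hcoc, psiPQ_zero, neg_zero]
  · rw [dH_psiPQ_add_jV, hcoc, psiPQ_zero, neg_zero]
  · rw [← sub_eq_zero, dV_psiPQ_sub_jH, hcoc, psiPQ_zero, neg_zero]

/-- For a homogeneous group `n`-cocycle `f` (with `n = m + 1 ≥ 1`), the cochains
`ψ^{p,q} = (-1)^p f` with `p + q = n - 1` satisfy `d_v ψ^{p,q} = - d_h ψ^{p-1,q+1}`
for `1 ≤ p ≤ n-1`, `d_h ψ^{n-1,0} = - j_v(f)` and `d_v ψ^{0,n-1} = j_h(f)`.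
Hence the total differential of `∑_{p+q=n-1} ψ^{p,q}`, taken with the appropriate
overall sign, equals `j_v(f) - j_h(f)`: the images `j_v(f)` and `j_h(f)` of `f`
in the total complex are cohomologous. -/
theorem psi_total_coboundary {G : Type*} [Group G] {A : Type*} [AddCommGroup A]
    [DistribMulAction G A] (m : ℕ) (f : (Fin (m + 2) → G) → A)
    (hcoc : stdDiff G A (m + 1) f = 0)
    (heq : ∀ g : G, cochainAct (m + 1) g f = f) :
    (∀ (p q : ℕ) (h1 : p + 1 + 1 + (q + 1) = m + 2) (h2 : p + 1 + (q + 1 + 1) = m + 2),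
      dV (p + 1) q (psiPQ f (p + 1) q h1) + dH p (q + 1) (psiPQ f p (q + 1) h2) = 0) ∧
    (∀ h1 : m + 1 + (0 + 1) = m + 2,
      dH m 0 (psiPQ f m 0 h1) + jV f = 0) ∧
    (∀ h2 : 0 + 1 + (m + 1) = m + 2,
      dV 0 m (psiPQ f 0 m h2) = jH f) :=
  psi_total_coboundary_general m f hcoc
end

section
/- The locally continuous equivariant double complex is closed under the differentials: if f: G^{p+1} × G^{q+1} → A is continuous on G^{p+1} × Γ_U^q for some identity neighbourhood U, then d_h f is continuous on G^{p+2} × Γ_U^q and d_v f is continuous on G^{p+1} × Γ_U^{q+1} (for the same U). -/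
/-- The diagonal neighbourhood `Γ_U^q = {(g₀,…,g_q) ∈ G^{q+1} ∣ ∀ i j, g_i⁻¹ g_j ∈ U}`. -/
def diagNbhd {G : Type*} [Group G] (U : Set G) (q : ℕ) : Set (Fin (q + 1) → G) :=
  {g | ∀ i j, (g i)⁻¹ * g j ∈ U}

theorem continuousOn_sum_smul_comp {X Y R A ι : Type*} [TopologicalSpace X]
    [TopologicalSpace Y] [AddCommMonoid A] [TopologicalSpace A] [ContinuousAdd A] [SMul R A]
    [ContinuousConstSMul R A] [Fintype ι] {f : Y → A} {s : Set Y} {t : Set X}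
    (hf : ContinuousOn f s) (c : ι → R) {φ : ι → X → Y} (hφ : ∀ i, Continuous (φ i))
    (hφts : ∀ i, Set.MapsTo (φ i) t s) :
    ContinuousOn (fun x => ∑ i, c i • f (φ i x)) t :=
  continuousOn_finsetSum _ fun i _ => (hf.comp (hφ i).continuousOn (hφts i)).const_smul (c i)

theorem mapsTo_precomp_diagNbhd {G : Type*} [Group G] (U : Set G) {m n : ℕ}
    (σ : Fin (m + 1) → Fin (n + 1)) :
    Set.MapsTo (· ∘ σ) (diagNbhd U n) (diagNbhd U m) :=
  fun _ hg i j => hg (σ i) (σ j)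

theorem lcDoubleComplex_closed_under_differentials_general {G : Type*} [Group G]
    [TopologicalSpace G] {A : Type*} [AddCommGroup A]
    [TopologicalSpace A] [IsTopologicalAddGroup A]
    (U : Set G) (p q : ℕ)
    (f : (Fin (p + 1) → G) × (Fin (q + 1) → G) → A)
    (hf : ContinuousOn f ((Set.univ : Set (Fin (p + 1) → G)) ×ˢ diagNbhd U q)) :
    ContinuousOn (dH p q f) ((Set.univ : Set (Fin (p + 2) → G)) ×ˢ diagNbhd U q) ∧
    ContinuousOn (dV p q f)
      ((Set.univ : Set (Fin (p + 1) → G)) ×ˢ diagNbhd U (q + 1)) := by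
  constructor
  · exact continuousOn_sum_smul_comp
      (φ := fun i : Fin (p + 2) => Prod.map (· ∘ i.succAbove) id)
      hf _ (fun i => (Pi.continuous_precomp i.succAbove).prodMap continuous_id)
      (fun i => (Set.mapsTo_univ (· ∘ i.succAbove) _).prodMap (Set.mapsTo_id _))
  · refine ContinuousOn.fun_const_smul ?_ _
    exact continuousOn_sum_smul_comp
      (φ := fun i : Fin (q + 2) => Prod.map id (· ∘ i.succAbove))
      hf _ (fun i => continuous_id.prodMap (Pi.continuous_precomp i.succAbove))
      (fun i => (Set.mapsTo_id _).prodMap (mapsTo_precomp_diagNbhd U i.succAbove))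

/-- The locally continuous double complex is closed under both differentials:
if `f : G^{p+1} × G^{q+1} → A` is continuous on `G^{p+1} × Γ_U^q`, then `d_h f`
is continuous on `G^{p+2} × Γ_U^q` and `d_v f` is continuous on
`G^{p+1} × Γ_U^{q+1}`, for the same identity neighbourhood `U`. -/
theorem lcDoubleComplex_closed_under_differentials {G : Type*} [Group G]
    [TopologicalSpace G] [IsTopologicalGroup G] {A : Type*} [AddCommGroup A]
    [TopologicalSpace A] [IsTopologicalAddGroup A]
    (U : Set G) (hU : U ∈ nhds (1 : G)) (p q : ℕ)
    (f : (Fin (p + 1) → G) × (Fin (q + 1) → G) → A)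
    (hf : ContinuousOn f ((Set.univ : Set (Fin (p + 1) → G)) ×ˢ diagNbhd U q)) :
    ContinuousOn (dH p q f) ((Set.univ : Set (Fin (p + 2) → G)) ×ˢ diagNbhd U q) ∧
    ContinuousOn (dV p q f)
      ((Set.univ : Set (Fin (p + 1) → G)) ×ˢ diagNbhd U (q + 1)) :=
  lcDoubleComplex_closed_under_differentials_general U p q f hf
end

section
/- The horizontal contracting homotopy preserves equivariance and local continuity: if f ∈ A^{p,q}_{lc}(G,A) is G-equivariant (continuous on G^{p+1} × Γ_U^q for some identity neighbourhood U), then h^p(f)(x_0,...,x_{p-1}, ȳ) := (-1)^p f(x_0,...,x_{p-1}, y_0, ȳ) is again G-equivariant and continuous on G^{p} × Γ_U^q. -/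
/-- The `G`-action on `A^{p,q}(G,A)`:
`(g.f)(x̄,ȳ) = g • f(g⁻¹x̄, g⁻¹ȳ)` (diagonal on arguments, twisted on values). -/
def actPQ {G : Type*} [Group G] {A : Type*} [AddCommGroup A] [DistribMulAction G A]
    {p q : ℕ} (g : G) (f : (Fin (p + 1) → G) × (Fin (q + 1) → G) → A) :
    (Fin (p + 1) → G) × (Fin (q + 1) → G) → A :=
  fun xy => g • f (fun i => g⁻¹ * xy.1 i, fun j => g⁻¹ * xy.2 j)

/-- A cochain in `A^{p,q}(G,A)` is equivariant if it is fixed by the `G`-action. -/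
def EquivariantPQ {G : Type*} [Group G] {A : Type*} [AddCommGroup A] [DistribMulAction G A]
    {p q : ℕ} (f : (Fin (p + 1) → G) × (Fin (q + 1) → G) → A) : Prop :=
  ∀ g : G, actPQ g f = f

/-- The contracting homotopy of the rows:
`(h^{p+1} f)(x₀,…,x_p,ȳ) = (-1)^{p+1} f(x₀,…,x_p,y₀,ȳ)`. -/
def rowHomotopy {G : Type*} {A : Type*} [AddCommGroup A] (p q : ℕ)
    (f : (Fin (p + 2) → G) × (Fin (q + 1) → G) → A) :
    (Fin (p + 1) → G) × (Fin (q + 1) → G) → A :=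
  fun xy => ((-1 : ℤ) ^ (p + 1)) • f (Fin.snoc xy.1 (xy.2 0), xy.2)

/- `rowHomotopy` merely copies `y₀` into a new last `x`-slot and multiplies by a sign. Copying a
coordinate commutes with the diagonal action and the sign commutes with the `G`-action on `A`,
so `rowHomotopy` intertwines the `G`-actions; and since the copying map is continuous and leaves
`ȳ` untouched, it maps `G^{p+1} × Γ_U^q` into `G^{p+2} × Γ_U^q` continuously. -/

section RowHomotopy

variable {G A : Type*} [AddCommGroup A] {p q : ℕ}

theorem actPQ_rowHomotopy [Group G] [DistribMulAction G A] (g : G)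
    (f : (Fin (p + 2) → G) × (Fin (q + 1) → G) → A) :
    actPQ g (rowHomotopy p q f) = rowHomotopy p q (actPQ g f) := by
  funext xy
  have hsnoc : (fun i => g⁻¹ * (Fin.snoc xy.1 (xy.2 0) : Fin (p + 2) → G) i)
      = Fin.snoc (fun i => g⁻¹ * xy.1 i) (g⁻¹ * xy.2 0) :=
    Fin.comp_snoc (g⁻¹ * ·) xy.1 (xy.2 0)
  simp only [actPQ, rowHomotopy, hsnoc, smul_comm g]

theorem EquivariantPQ.rowHomotopy [Group G] [DistribMulAction G A]
    {f : (Fin (p + 2) → G) × (Fin (q + 1) → G) → A} (hf : EquivariantPQ f) :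
    EquivariantPQ (rowHomotopy p q f) := fun g => by
  rw [actPQ_rowHomotopy, hf g]

theorem ContinuousOn.rowHomotopy [TopologicalSpace G] [TopologicalSpace A]
    [ContinuousConstSMul ℤ A] {S : Set (Fin (q + 1) → G)}
    {f : (Fin (p + 2) → G) × (Fin (q + 1) → G) → A}
    (hf : ContinuousOn f (Set.univ ×ˢ S)) :
    ContinuousOn (rowHomotopy p q f) (Set.univ ×ˢ S) := by
  have hinsert : Continuous fun xy : (Fin (p + 1) → G) × (Fin (q + 1) → G) =>
      ((Fin.snoc xy.1 (xy.2 0) : Fin (p + 2) → G), xy.2) :=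
    (continuous_fst.finSnoc (A := fun _ => G) (continuous_apply 0).snd').prodMk continuous_snd
  exact (hf.comp hinsert.continuousOn fun _ hxy => ⟨Set.mem_univ _, hxy.2⟩).const_smul
    ((-1 : ℤ) ^ (p + 1))

end RowHomotopy

theorem rowHomotopy_preserves_general {G : Type*} [Group G] [TopologicalSpace G]
    {A : Type*} [AddCommGroup A] [TopologicalSpace A]
    [IsTopologicalAddGroup A] [DistribMulAction G A]
    (U : Set G) (p q : ℕ)
    (f : (Fin (p + 2) → G) × (Fin (q + 1) → G) → A)
    (heq : EquivariantPQ f)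
    (hf : ContinuousOn f ((Set.univ : Set (Fin (p + 2) → G)) ×ˢ diagNbhd U q)) :
    EquivariantPQ (rowHomotopy p q f) ∧
    ContinuousOn (rowHomotopy p q f)
      ((Set.univ : Set (Fin (p + 1) → G)) ×ˢ diagNbhd U q) :=
  ⟨heq.rowHomotopy, hf.rowHomotopy⟩

/-- The horizontal contracting homotopy preserves equivariance and local
continuity: if `f ∈ A^{p+1,q}_{lc}(G,A)^G` is equivariant and continuous on
`G^{p+2} × Γ_U^q`, then `h(f)` is equivariant and continuous on `G^{p+1} × Γ_U^q`. -/
theorem rowHomotopy_preserves {G : Type*} [Group G] [TopologicalSpace G]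
    [IsTopologicalGroup G] {A : Type*} [AddCommGroup A] [TopologicalSpace A]
    [IsTopologicalAddGroup A] [DistribMulAction G A] [ContinuousSMul G A]
    (U : Set G) (hU : U ∈ nhds (1 : G)) (p q : ℕ)
    (f : (Fin (p + 2) → G) × (Fin (q + 1) → G) → A)
    (heq : EquivariantPQ f)
    (hf : ContinuousOn f ((Set.univ : Set (Fin (p + 2) → G)) ×ˢ diagNbhd U q)) :
    EquivariantPQ (rowHomotopy p q f) ∧
    ContinuousOn (rowHomotopy p q f)
      ((Set.univ : Set (Fin (p + 1) → G)) ×ˢ diagNbhd U q) :=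
  rowHomotopy_preserves_general U p q f heq hf
end
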